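/- arXiv:1706.03551 — 7 statements merged into one kernel-verified Lean document; each statement's English description precedes it below -/
import Mathlib

section
/- Let A and B be nonempty finite subsets of an abelian group G. Then |A + B| = |A| if and only if there exists a finite subgroup H of G such that B is contained in a coset of H and A is a union of cosets of H. -/
/-!
If `|A + B| = |A|`, then every translate `b +ᵥ A` with `b ∈ B` is all of `A + B`, so differences
of elements of `B` stabilize `A`; the stabilizer of `A` is the required subgroup, finite because `A`
is. Conversely, if `A + H = A` and `B ⊆ g +ᵥ H`, then `A + B ⊆ g +ᵥ A`.
-/

open Pointwise Finset

section

variable {G : Type*} [AddCommGroup G]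

theorem Set.add_subset_vadd_of_add_eq_of_subset_vadd {A B S : Set G} {g : G} (hA : A + S = A)
    (hB : B ⊆ g +ᵥ S) : A + B ⊆ g +ᵥ A :=
  calc A + B ⊆ A + (g +ᵥ S) := Set.add_subset_add_left hB
    _ = g +ᵥ (A + S) := add_vadd_comm g A S
    _ = g +ᵥ A := by rw [hA]

variable [DecidableEq G]

theorem Finset.card_add_le_of_add_eq_of_subset_vadd {A B : Finset G} {S : Set G} {g : G}
    (hA : (A : Set G) + S = A) (hB : (B : Set G) ⊆ g +ᵥ S) : #(A + B) ≤ #A := by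
  have hsub : A + B ⊆ g +ᵥ A := by
    rw [← coe_subset, coe_add, coe_vadd_finset]
    exact Set.add_subset_vadd_of_add_eq_of_subset_vadd hA hB
  simpa only [card_vadd_finset] using card_le_card hsub

theorem Finset.vadd_finset_eq_add_of_card_add_eq {A B : Finset G} {b : G} (h : #(A + B) = #A)
    (hb : b ∈ B) : b +ᵥ A = A + B := by
  refine eq_of_subset_of_card_le ?_ (by rw [h, card_vadd_finset])
  rw [add_comm A]
  exact vadd_finset_subset_add hb

theorem Finset.subset_vadd_stabilizer_of_card_add_eq {A B : Finset G} {b : G}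
    (h : #(A + B) = #A) (hb : b ∈ B) :
    (B : Set G) ⊆ b +ᵥ (AddAction.stabilizer G (A : Set G) : Set G) := by
  intro b' hb'
  rw [mem_leftAddCoset_iff, SetLike.mem_coe, AddAction.stabilizer_coe_finset,
    AddAction.mem_stabilizer_iff, ← vadd_vadd, vadd_finset_eq_add_of_card_add_eq h hb',
    ← vadd_finset_eq_add_of_card_add_eq h hb, neg_vadd_vadd]

end

theorem exact_inverse_sumset {G : Type*} [AddCommGroup G] [DecidableEq G]
    (A B : Finset G) (hA : A.Nonempty) (hB : B.Nonempty) :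
    (A + B).card = A.card ↔
      ∃ H : AddSubgroup G, (H : Set G).Finite ∧
        (∃ g : G, (B : Set G) ⊆ g +ᵥ (H : Set G)) ∧
        (A : Set G) + (H : Set G) = (A : Set G) := by
  constructor
  · intro h
    obtain ⟨b, hb⟩ := hB
    exact ⟨AddAction.stabilizer G (A : Set G),
      AddAction.stabilizer_finite (coe_nonempty.mpr hA) A.finite_toSet,
      ⟨b, subset_vadd_stabilizer_of_card_add_eq h hb⟩, AddAction.add_stabilizer_self _⟩
  · rintro ⟨H, -, ⟨g, hBg⟩, hAH⟩
    exact le_antisymm (card_add_le_of_add_eq_of_subset_vadd hAH hBg) (card_le_card_add_right hB)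
end

section
/- Let G be a finite group and let f : G → ℝ≥0 be a nonnegative function with ∑_{g∈G} f(g) = 1 (a probability density). Then the Cesàro means f_n = (1/n) ∑_{k=1}^n f^{*k} of the convolution powers of f converge pointwise to a function a : G → ℝ≥0 satisfying a * a = a. -/
/-!
Right convolution by a probability density `f` is a linear map `T v = v * f` that does not
increase the sup norm, and `f^{*(k+1)} = T^k f`, so the Cesàro means are the Birkhoff averages
of `T` at `f`. For a contraction `T` of a finite-dimensional space, a vector `Tz - z` fixed by `T`
vanishes, because `T^n z = z + n (Tz - z)` stays bounded; hence the space splits as the fixed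
vectors plus the range of `T - 1`, and the mean ergodic theorem makes the averages converge to a
fixed vector `a`. From `a * f = a` we get `a * f^{*k} = a` for `k ≥ 1`, so convolving the Cesàro
means on the left with `a` and passing to the limit gives `a * a = a`.
-/

open Filter Topology

/-- Convolution of functions on a finite group. -/
noncomputable def conv {G : Type*} [Group G] [Fintype G] (f h : G → ℝ) : G → ℝ :=
  fun g => ∑ x : G, f x * h (x⁻¹ * g)

/-- The `k`-fold convolution power of `f` (with `convPow f 0` the identity for convolution,
so that `convPow f k = f^{*k}` for `k ≥ 1`). -/
noncomputable def convPow {G : Type*} [Group G] [Fintype G] [DecidableEq G]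
    (f : G → ℝ) : ℕ → G → ℝ
  | 0 => fun g => if g = 1 then 1 else 0
  | n + 1 => conv (convPow f n) f

namespace LinearMap

variable {𝕜 E : Type*} [RCLike 𝕜] [NormedAddCommGroup E] [NormedSpace 𝕜 E]

theorem disjoint_eqLocus_one_range_sub_one (T : E →ₗ[𝕜] E) (hT : LipschitzWith 1 T) :
    Disjoint (eqLocus T 1) (range (T - 1)) := by
  rw [Submodule.disjoint_def]
  rintro _ hy_fixed ⟨z, rfl⟩
  set y := (T - 1) z
  have hTy : T y = y := hy_fixed
  have hTz : T z = z + y := by simp [y]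
  have hiter : ∀ n : ℕ, T^[n] z = z + (n : 𝕜) • y := by
    intro n
    induction n with
    | zero => simp
    | succ n ih =>
      rw [Function.iterate_succ_apply', ih, map_add, map_smul, hTy, hTz]
      push_cast
      rw [add_smul, one_smul]
      abel
  have hbound : ∀ n : ℕ, n * ‖y‖ ≤ 2 * ‖z‖ := by
    intro n
    have hcontr : ‖T^[n] z‖ ≤ ‖z‖ := by
      simpa [iterate_map_zero (T : E →+ E) n] using (hT.iterate n).dist_le_mul z 0
    calc (n : ℝ) * ‖y‖ = ‖T^[n] z - z‖ := by simp [hiter, norm_smul]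
      _ ≤ ‖T^[n] z‖ + ‖z‖ := norm_sub_le _ _
      _ ≤ 2 * ‖z‖ := by linarith
  by_contra hy
  obtain ⟨n, hn⟩ := exists_nat_gt (2 * ‖z‖ / ‖y‖)
  rw [div_lt_iff₀ (norm_pos_iff.2 hy)] at hn
  linarith [hbound n]

theorem exists_tendsto_birkhoffAverage_of_lipschitzWith_one [FiniteDimensional 𝕜 E]
    (T : E →ₗ[𝕜] E) (hT : LipschitzWith 1 T) (x : E) :
    ∃ y, T y = y ∧ Tendsto (birkhoffAverage 𝕜 T _root_.id · x) atTop (𝓝 y) := by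
  have hcompl : IsCompl (eqLocus T 1) (range (T - 1)) := by
    refine (Submodule.isCompl_iff_disjoint _ _ ?_).2 (T.disjoint_eqLocus_one_range_sub_one hT)
    rw [eqLocus_eq_ker_sub, add_comm, finrank_range_add_finrank_ker]
  let P := toContinuousLinearMap (Submodule.projectionOnto _ _ hcompl)
  refine ⟨P x, (P x).2, T.tendsto_birkhoffAverage_of_ker_subset_closure hT P
    (Submodule.projectionOnto_apply_left hcompl) (fun v hv => subset_closure ?_) x⟩
  rwa [← Submodule.ker_projectionOnto hcompl]

end LinearMap

section Convolution

variable {G : Type*} [Group G] [Fintype G]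

theorem conv_assoc (u v w : G → ℝ) : conv (conv u v) w = conv u (conv v w) := by
  funext g
  simp only [conv, Finset.sum_mul, Finset.mul_sum]
  rw [Finset.sum_comm]
  refine Finset.sum_congr rfl fun y _ => ?_
  rw [← Equiv.sum_comp (Equiv.mulLeft y) (fun x => u y * v (y⁻¹ * x) * w (x⁻¹ * g))]
  simp [mul_assoc]

variable (G) in
noncomputable def convBilin : (G → ℝ) →ₗ[ℝ] (G → ℝ) →ₗ[ℝ] (G → ℝ) :=
  LinearMap.mk₂ ℝ conv
    (fun u u' v => by funext g; simp [conv, add_mul, Finset.sum_add_distrib])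
    (fun c u v => by funext g; simp [conv, Finset.mul_sum, mul_assoc])
    (fun u v v' => by funext g; simp [conv, mul_add, Finset.sum_add_distrib])
    (fun c u v => by funext g; simp [conv, Finset.mul_sum, mul_left_comm])

@[simp]
theorem convBilin_apply (u v : G → ℝ) : convBilin G u v = conv u v := rfl

theorem sum_comp_inv_mul (f : G → ℝ) (g : G) : ∑ x, f (x⁻¹ * g) = ∑ x, f x :=
  Fintype.sum_equiv ((Equiv.inv G).trans (Equiv.mulRight g)) _ _ fun _ => rfl

theorem norm_conv_le {f : G → ℝ} (hf : ∀ g, 0 ≤ f g) (hsum : ∑ g, f g = 1) (v : G → ℝ) :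
    ‖conv v f‖ ≤ ‖v‖ := by
  refine pi_norm_le_iff_of_nonneg (norm_nonneg v) |>.2 fun g => ?_
  calc ‖conv v f g‖ ≤ ∑ x, ‖v x‖ * f (x⁻¹ * g) := by
        refine (norm_sum_le _ _).trans_eq (Finset.sum_congr rfl fun x _ => ?_)
        rw [norm_mul, Real.norm_of_nonneg (hf _)]
    _ ≤ ∑ x, ‖v‖ * f (x⁻¹ * g) :=
        Finset.sum_le_sum fun x _ => mul_le_mul_of_nonneg_right (norm_le_pi_norm v x) (hf _)
    _ = ‖v‖ := by rw [← Finset.mul_sum, sum_comp_inv_mul, hsum, mul_one]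

theorem lipschitzWith_one_convBilin_flip {f : G → ℝ} (hf : ∀ g, 0 ≤ f g)
    (hsum : ∑ g, f g = 1) : LipschitzWith 1 ((convBilin G).flip f) := by
  simpa using AddMonoidHomClass.lipschitz_of_bound ((convBilin G).flip f) 1
    fun v => by simpa using norm_conv_le hf hsum v

variable [DecidableEq G]

theorem convPow_nonneg {f : G → ℝ} (hf : ∀ g, 0 ≤ f g) (k : ℕ) (g : G) :
    0 ≤ convPow f k g := by
  induction k generalizing g with
  | zero => simp only [convPow]; positivity
  | succ k ih => exact Finset.sum_nonneg fun x _ => mul_nonneg (ih x) (hf _)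

theorem convPow_one (f : G → ℝ) : convPow f 1 = f := by
  funext g
  simp only [convPow, conv]
  rw [Finset.sum_eq_single 1] <;> simp +contextual

theorem iterate_convBilin_flip_self (f : G → ℝ) (k : ℕ) :
    ((convBilin G).flip f)^[k] f = convPow f (k + 1) := by
  induction k with
  | zero => exact (convPow_one f).symm
  | succ k ih => rw [Function.iterate_succ_apply', ih]; rfl

theorem cesaroMean_convPow_eq_birkhoffAverage (f : G → ℝ) (n : ℕ) (g : G) :
    (n : ℝ)⁻¹ * ∑ k ∈ Finset.Icc 1 n, convPow f k g =
      birkhoffAverage ℝ ((convBilin G).flip f) id n f g := by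
  rw [← Finset.Ico_add_one_right_eq_Icc, Finset.sum_Ico_eq_sum_range, Nat.add_sub_cancel]
  simp only [birkhoffAverage, birkhoffSum, iterate_convBilin_flip_self, id, Pi.smul_apply,
    Finset.sum_apply, smul_eq_mul, add_comm]

theorem conv_convPow_succ_of_conv_eq {a f : G → ℝ} (ha : conv a f = a) (k : ℕ) :
    conv a (convPow f (k + 1)) = a := by
  induction k with
  | zero => rw [convPow_one, ha]
  | succ k ih => rw [convPow, ← conv_assoc, ih, ha]

theorem conv_birkhoffAverage_of_conv_eq {a f : G → ℝ} (ha : conv a f = a) {n : ℕ} (hn : n ≠ 0) :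
    conv a (birkhoffAverage ℝ ((convBilin G).flip f) id n f) = a := by
  rw [← convBilin_apply, map_birkhoffAverage ℝ ℝ]
  simp only [birkhoffAverage, birkhoffSum, Function.comp_apply, id, convBilin_apply,
    iterate_convBilin_flip_self, conv_convPow_succ_of_conv_eq ha, Finset.sum_const,
    Finset.card_range, ← Nat.cast_smul_eq_nsmul ℝ, smul_smul]
  rw [inv_mul_cancel₀ (Nat.cast_ne_zero.2 hn), one_smul]

end Convolution

theorem cesaro_convolution_powers_converge {G : Type*} [Group G] [Fintype G] [DecidableEq G]
    (f : G → ℝ) (hf : ∀ g, 0 ≤ f g) (hsum : ∑ g : G, f g = 1) :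
    ∃ a : G → ℝ, (∀ g, 0 ≤ a g) ∧ conv a a = a ∧
      ∀ g : G, Tendsto (fun n : ℕ => (n : ℝ)⁻¹ * ∑ k ∈ Finset.Icc 1 n, convPow f k g)
        atTop (nhds (a g)) := by
  obtain ⟨a, ha_fixed, hlim⟩ :=
    ((convBilin G).flip f).exists_tendsto_birkhoffAverage_of_lipschitzWith_one
      (lipschitzWith_one_convBilin_flip hf hsum) f
  have hlim_apply (g : G) :
      Tendsto (fun n : ℕ => (n : ℝ)⁻¹ * ∑ k ∈ Finset.Icc 1 n, convPow f k g) atTop (𝓝 (a g)) := by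
    simpa only [cesaroMean_convPow_eq_birkhoffAverage] using tendsto_pi_nhds.1 hlim g
  refine ⟨a, fun g => ge_of_tendsto' (hlim_apply g) fun n => ?_, ?_, hlim_apply⟩
  · exact mul_nonneg (by positivity) (Finset.sum_nonneg fun k _ => convPow_nonneg hf k g)
  · have hconv := ((convBilin G a).continuous_of_finiteDimensional.tendsto a).comp hlim
    refine tendsto_nhds_unique hconv (tendsto_const_nhds.congr' ?_)
    filter_upwards [eventually_ne_atTop 0] with n hn
    exact (conv_birkhoffAverage_of_conv_eq ha_fixed hn).symm
end

section
/- Let G be a finite group and let a : G → ℝ≥0 be a nonzero nonnegative function satisfying a * a = a (idempotent under convolution). Then the support of a is a subgroup H of G and a = (1/|H|)·1_H, the normalized indicator function of H. -/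
open scoped Pointwise

theorem sum_eq_natCard_mul_of_eq_on {α R : Type*} [Fintype α] [NonAssocSemiring R]
    {a : α → R} (s : Set α) {c : R} (hs : ∀ x, a x ≠ 0 ↔ x ∈ s) (hc : ∀ x ∈ s, a x = c) :
    ∑ x, a x = Nat.card s * c := by
  classical
  have hfilter : Finset.univ.filter (fun x => a x ≠ 0) = s.toFinset := by
    ext x
    simp [hs]
  rw [← Finset.sum_filter_ne_zero, hfilter,
    Finset.sum_congr rfl fun x hx => hc x (by simpa using hx), Finset.sum_const,
    nsmul_eq_mul, Nat.card_eq_card_toFinset]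

section Convolution

variable {G : Type*} [Group G] [Fintype G]

theorem support_conv {f h : G → ℝ} (hf : ∀ g, 0 ≤ f g) (hh : ∀ g, 0 ≤ h g) :
    Function.support (conv f h) = Function.support f * Function.support h := by
  ext g
  simp only [Function.mem_support, conv, Set.mem_mul, ne_eq,
    Finset.sum_eq_zero_iff_of_nonneg fun x _ => mul_nonneg (hf x) (hh _)]
  constructor
  · intro hg
    obtain ⟨x, -, hx⟩ := not_forall₂.mp hg
    exact ⟨x, left_ne_zero_of_mul hx, x⁻¹ * g, right_ne_zero_of_mul hx, mul_inv_cancel_left x g⟩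
  · rintro ⟨x, hx, y, hy, rfl⟩ hzero
    exact mul_ne_zero hx (by rwa [inv_mul_cancel_left]) (hzero x (Finset.mem_univ x))

theorem sum_conv (f h : G → ℝ) : ∑ g, conv f h g = (∑ g, f g) * ∑ g, h g := by
  simp only [conv, Finset.sum_mul_sum]
  rw [Finset.sum_comm]
  refine Finset.sum_congr rfl fun x _ => ?_
  rw [← Finset.mul_sum, ← Finset.mul_sum]
  congr 1
  exact Fintype.sum_equiv (Equiv.mulLeft x⁻¹) _ _ fun g => rfl

variable {a : G → ℝ}

theorem sum_eq_one_of_conv_self (hpos : ∀ g, 0 ≤ a g) (hne : a ≠ 0) (hidem : conv a a = a) :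
    ∑ g, a g = 1 := by
  have hsq : (∑ g, a g) * ∑ g, a g = ∑ g, a g := by rw [← sum_conv, hidem]
  exact (mul_eq_left₀ (Fintype.sum_pos (lt_of_le_of_ne hpos (Ne.symm hne))).ne').mp hsq

theorem apply_inv_mul_eq_of_isMax_of_conv_self (hpos : ∀ g, 0 ≤ a g) (hmass : ∑ g, a g = 1)
    (hidem : conv a a = a) {g₀ : G} (hmax : ∀ g, a g ≤ a g₀) {x : G} (hx : a x ≠ 0) :
    a (x⁻¹ * g₀) = a g₀ := by
  have hle : ∀ y ∈ Finset.univ, a y * a (y⁻¹ * g₀) ≤ a y * a g₀ :=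
    fun y _ => mul_le_mul_of_nonneg_left (hmax _) (hpos y)
  have hsum : ∑ y, a y * a (y⁻¹ * g₀) = ∑ y, a y * a g₀ := by
    rw [← Finset.sum_mul, hmass, one_mul]
    exact congrFun hidem g₀
  exact mul_left_cancel₀ hx ((Finset.sum_eq_sum_iff_of_le hle).mp hsum x (Finset.mem_univ x))

end Convolution

theorem idempotent_is_normalized_subgroup_indicator {G : Type*} [Group G] [Fintype G]
    (a : G → ℝ) (hpos : ∀ g, 0 ≤ a g) (hne : a ≠ 0) (hidem : conv a a = a) :
    ∃ H : Subgroup G, (∀ g : G, a g ≠ 0 ↔ g ∈ H) ∧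
      ∀ g ∈ H, a g = ((Nat.card H : ℝ))⁻¹ := by
  have hsupp : Function.support a * Function.support a = Function.support a := by
    rw [← support_conv hpos hpos, hidem]
  let H := subgroupOfIdempotent _ (Function.support_nonempty_iff.mpr hne) hsupp
  have hH : ∀ g, a g ≠ 0 ↔ g ∈ H := fun g => Iff.rfl
  have hmass := sum_eq_one_of_conv_self hpos hne hidem
  obtain ⟨g₀, -, hmax⟩ := Finset.univ.exists_max_image a Finset.univ_nonempty
  have hg₀ : g₀ ∈ H := by
    obtain ⟨g, hg⟩ := Function.support_nonempty_iff.mpr hne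
    exact (((hpos g).lt_of_ne' hg).trans_le (hmax g (Finset.mem_univ g))).ne'
  have hconst : ∀ g ∈ H, a g = a g₀ := fun g hg => by
    simpa using apply_inv_mul_eq_of_isMax_of_conv_self hpos hmass hidem
      (fun g => hmax g (Finset.mem_univ g)) (H.mul_mem hg₀ (H.inv_mem hg))
  rw [sum_eq_natCard_mul_of_eq_on (H : Set G) hH hconst] at hmass
  exact ⟨H, hH, fun g hg => (hconst g hg).trans (eq_inv_of_mul_eq_one_right hmass)⟩
end

section
/- Let G be a finite group and let a, b : G → ℝ≥0 be nonzero nonnegative functions with ∑_g b(g) = 1 and a * b = a. Then for every function x : G → ℂ, a * (x·b) = (∑_g x(g) b(g)) · a, where (x·b)(g) = x(g) b(g) is the pointwise product. -/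
/-- Convolution of real-valued functions on a finite group. -/
noncomputable def convR {G : Type*} [Group G] [Fintype G] (f h : G → ℝ) : G → ℝ :=
  fun g => ∑ y : G, f y * h (y⁻¹ * g)

/-- Convolution of complex-valued functions on a finite group. -/
noncomputable def convC {G : Type*} [Group G] [Fintype G] (f h : G → ℂ) : G → ℂ :=
  fun g => ∑ y : G, f y * h (y⁻¹ * g)

/-!
If `a * b = a` with `b` a probability vector, then `a` is invariant under right translation by
every point of the support of `b`: expanding squares,
`∑_z b z ‖a - a(· z⁻¹)‖² = 2 ‖a‖² - 2 ⟪a, a * b⟫ = 0`, and every summand is nonnegative.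
Hence in `a * (x b)(g) = ∑_z a(g z⁻¹) x(z) b(z)` the factor `a(g z⁻¹)` may be replaced by `a g`.
-/

open Finset

section Reindex

variable {G M : Type*} [Group G] [Fintype G] [AddCommMonoid M]

theorem Fintype.sum_apply_inv_mul_eq_sum_apply_mul_inv (φ : G → G → M) (g : G) :
    ∑ y, φ y (y⁻¹ * g) = ∑ z, φ (g * z⁻¹) z :=
  (Fintype.sum_equiv ((Equiv.inv G).trans (Equiv.mulLeft g)) _ _
    fun z => by simp [mul_assoc]).symm

theorem Fintype.sum_comp_mul_right (f : G → M) (z : G) : ∑ g, f (g * z) = ∑ g, f g :=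
  Equiv.sum_comp (Equiv.mulRight z) f

end Reindex

section Absorption

variable {G : Type*} [Group G] [Fintype G]

theorem convR_apply_eq_sum_mul_inv (a b : G → ℝ) (g : G) :
    convR a b g = ∑ z, a (g * z⁻¹) * b z :=
  Fintype.sum_apply_inv_mul_eq_sum_apply_mul_inv (fun y w => a y * b w) g

theorem convC_apply_eq_sum_mul_inv (a b : G → ℂ) (g : G) :
    convC a b g = ∑ z, a (g * z⁻¹) * b z :=
  Fintype.sum_apply_inv_mul_eq_sum_apply_mul_inv (fun y w => a y * b w) g

theorem sum_sq_sub_mul_inv (a : G → ℝ) (z : G) :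
    ∑ g, (a g - a (g * z⁻¹)) ^ 2 = 2 * ∑ g, a g ^ 2 - 2 * ∑ g, a g * a (g * z⁻¹) := by
  have htranslate : ∑ g, a (g * z⁻¹) ^ 2 = ∑ g, a g ^ 2 :=
    Fintype.sum_comp_mul_right (fun g => a g ^ 2) z⁻¹
  simp only [sub_sq, sum_sub_distrib, sum_add_distrib, htranslate, ← mul_sum, mul_assoc]
  ring

theorem sum_mul_sum_mul_mul_inv_of_convR_eq {a b : G → ℝ} (habs : convR a b = a) :
    ∑ z, b z * ∑ g, a g * a (g * z⁻¹) = ∑ g, a g ^ 2 := by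
  calc ∑ z, b z * ∑ g, a g * a (g * z⁻¹)
      = ∑ g, a g * ∑ z, a (g * z⁻¹) * b z := by
        simp only [mul_sum]
        rw [sum_comm]
        exact sum_congr rfl fun g _ => sum_congr rfl fun z _ => by ring
    _ = ∑ g, a g ^ 2 := by
        simp only [← convR_apply_eq_sum_mul_inv, habs, sq]

theorem sum_mul_sum_sq_sub_mul_inv_eq_zero {a b : G → ℝ} (hbsum : ∑ g, b g = 1)
    (habs : convR a b = a) :
    ∑ z, b z * ∑ g, (a g - a (g * z⁻¹)) ^ 2 = 0 := by
  have hcorr := sum_mul_sum_mul_mul_inv_of_convR_eq habs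
  simp only [sum_sq_sub_mul_inv, mul_sub, sum_sub_distrib, mul_left_comm (b _) (2 : ℝ),
    ← mul_sum, ← sum_mul, hbsum, hcorr]
  ring

theorem apply_mul_inv_eq_of_convR_eq {a b : G → ℝ} (hb : ∀ g, 0 ≤ b g)
    (hbsum : ∑ g, b g = 1) (habs : convR a b = a) {z : G} (hz : b z ≠ 0) (g : G) :
    a (g * z⁻¹) = a g := by
  have hsummand := (sum_eq_zero_iff_of_nonneg fun w _ =>
    mul_nonneg (hb w) (sum_nonneg fun g _ => sq_nonneg (a g - a (g * w⁻¹)))).mp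
    (sum_mul_sum_sq_sub_mul_inv_eq_zero hbsum habs) z (mem_univ z)
  have hsq := (sum_eq_zero_iff_of_nonneg fun g _ => sq_nonneg (a g - a (g * z⁻¹))).mp
    ((mul_eq_zero.mp hsummand).resolve_left hz) g (mem_univ g)
  exact (sub_eq_zero.mp (pow_eq_zero_iff two_ne_zero |>.mp hsq)).symm

end Absorption

theorem absorption_of_pointwise_multiples_general {G : Type*} [Group G] [Fintype G]
    (a b : G → ℝ) (hb : ∀ g, 0 ≤ b g)
    (hbsum : ∑ g : G, b g = 1)
    (habs : convR a b = a) :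
    ∀ x : G → ℂ,
      convC (fun g => (a g : ℂ)) (fun g => x g * (b g : ℂ)) =
        fun g => (∑ y : G, x y * (b y : ℂ)) * (a g : ℂ) := by
  intro x
  funext g
  rw [convC_apply_eq_sum_mul_inv, sum_mul]
  refine sum_congr rfl fun z _ => ?_
  by_cases hz : b z = 0
  · simp [hz]
  · rw [apply_mul_inv_eq_of_convR_eq hb hbsum habs hz g]
    ring

theorem absorption_of_pointwise_multiples {G : Type*} [Group G] [Fintype G]
    (a b : G → ℝ) (ha : ∀ g, 0 ≤ a g) (hb : ∀ g, 0 ≤ b g)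
    (hane : a ≠ 0) (hbne : b ≠ 0) (hbsum : ∑ g : G, b g = 1)
    (habs : convR a b = a) :
    ∀ x : G → ℂ,
      convC (fun g => (a g : ℂ)) (fun g => x g * (b g : ℂ)) =
        fun g => (∑ y : G, x y * (b y : ℂ)) * (a g : ℂ) :=
  absorption_of_pointwise_multiples_general a b hb hbsum habs
end

section
/- Let G be a finite group and p, q : G → {0,1} indicator functions of nonempty subsets P, Q ⊆ G, with convolution (f*h)(g) = (1/|G|)∑_y f(y)h(y^{-1}g). If |P·Q| = |P|, then p * q takes only the values 0 and |Q|/|G|, i.e., p * q = (|Q|/|G|)·1_{P·Q}. -/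
open Pointwise

theorem equality_case_convolution_indicator {G : Type*} [Group G] [Fintype G] [DecidableEq G]
    (P Q : Finset G) (hP : P.Nonempty) (hQ : Q.Nonempty)
    (h : (P * Q).card = P.card) :
    ∀ g : G,
      (Fintype.card G : ℝ)⁻¹ *
          ∑ y : G, (if y ∈ P then (1 : ℝ) else 0) * (if y⁻¹ * g ∈ Q then (1 : ℝ) else 0) =
        (Q.card : ℝ) / (Fintype.card G : ℝ) * (if g ∈ P * Q then (1 : ℝ) else 0) := by
  classical
  set N : G → ℕ := fun g => (P.filter (fun y => y⁻¹ * g ∈ Q)).card with hN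
  have hmem : ∀ g y, y ∈ P → y⁻¹ * g ∈ Q → g ∈ P * Q := by
    intro g y hy hyq
    have := Finset.mul_mem_mul hy hyq
    simpa using this
  have hzero : ∀ g, g ∉ P * Q → N g = 0 := by
    intro g hg
    simp only [hN, Finset.card_eq_zero, Finset.filter_eq_empty_iff]
    intro y hy hyq
    exact hg (hmem g y hy hyq)
  have hle : ∀ g, N g ≤ Q.card := by
    intro g
    apply Finset.card_le_card_of_injOn (fun y => y⁻¹ * g)
    · intro y hy
      exact (Finset.mem_filter.mp hy).2
    · intro a _ b _ hab
      have : a⁻¹ = b⁻¹ := mul_right_cancel hab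
      simpa using congrArg Inv.inv this
  have hinner : ∀ y : G, (∑ g : G, if y⁻¹ * g ∈ Q then 1 else 0) = Q.card := by
    intro y
    rw [← Equiv.sum_comp (Equiv.mulLeft y) (fun g => if y⁻¹ * g ∈ Q then 1 else 0)]
    simp [Finset.sum_ite_mem]
  have hsum : ∑ g ∈ P * Q, N g = P.card * Q.card := by
    have h1 : ∑ g ∈ P * Q, N g = ∑ g : G, N g := by
      apply Finset.sum_subset (Finset.subset_univ _)
      intro g _ hg
      exact hzero g hg
    rw [h1]
    have h2 : ∀ g : G, N g = ∑ y ∈ P, if y⁻¹ * g ∈ Q then 1 else 0 := by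
      intro g; exact Finset.card_filter _ _
    simp_rw [h2]
    rw [Finset.sum_comm]
    simp_rw [hinner]
    simp [mul_comm]
  have heq : ∀ g ∈ P * Q, N g = Q.card := by
    intro g hg
    by_contra hne
    have hlt : N g < Q.card := lt_of_le_of_ne (hle g) hne
    have : ∑ x ∈ P * Q, N x < ∑ _x ∈ P * Q, Q.card :=
      Finset.sum_lt_sum (fun i _ => hle i) ⟨g, hg, hlt⟩
    rw [hsum, Finset.sum_const, smul_eq_mul, h] at this
    exact lt_irrefl _ this
  intro g
  have hcast : (∑ y : G, (if y ∈ P then (1 : ℝ) else 0) * (if y⁻¹ * g ∈ Q then (1 : ℝ) else 0))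
      = (N g : ℝ) := by
    have hrw : ∀ y : G, (if y ∈ P then (1 : ℝ) else 0) * (if y⁻¹ * g ∈ Q then (1 : ℝ) else 0)
        = if y ∈ P then (if y⁻¹ * g ∈ Q then (1 : ℝ) else 0) else 0 := by
      intro y; split <;> simp
    simp_rw [hrw]
    rw [Finset.sum_ite_mem, Finset.univ_inter]
    simp only [hN, Finset.card_filter]
    push_cast
    rfl
  rw [hcast]
  by_cases hg : g ∈ P * Q
  · rw [heq g hg]
    simp [hg, div_eq_inv_mul]
  · rw [hzero g hg]
    simp [hg]
end

section
/- Consider the two-dimensional real algebra with basis {e₁, p} where the 'multiplication' and 'convolution' of the ℤ₂ group planar algebra are modeled as follows: elements are x = a·id + b·J with a, b ≥ 0 (δ = √2), and the block map B_{1/2} acts on the projective coordinate t = b/a by t ↦ t + t(t²−1)·(2δ²(t²+1)+(δ³+3δ)t)/(2δ² + (δ³+9δ)t + (6δ²+8)t² + 6δt³). Then: t = 1 is a fixed point; if 0 < t < 1 then the orbit t_n converges monotonically to 0; and if t > 1 then t_n converges to ∞ (equivalently 1/t_n → 0). -/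
open Filter

/-- `δ = √2` for the `ℤ₂` subfactor. -/
noncomputable def isingDelta : ℝ := Real.sqrt 2

/-- The action of the block map `B_{1/2}` on the projective coordinate `t = b/a`
for the `ℤ₂` case. -/
noncomputable def isingBlock (t : ℝ) : ℝ :=
  t + t * (t ^ 2 - 1) *
      (2 * isingDelta ^ 2 * (t ^ 2 + 1) + (isingDelta ^ 3 + 3 * isingDelta) * t) /
      (2 * isingDelta ^ 2 + (isingDelta ^ 3 + 9 * isingDelta) * t +
        (6 * isingDelta ^ 2 + 8) * t ^ 2 + 6 * isingDelta * t ^ 3)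

/-!
With `δ² = 2` the map simplifies to `F(t) = t + t(t² - 1)(4t² + 5δt + 4) / Q(t)` with
`Q(t) = 4 + 11δt + 20t² + 6δt³ > 0` for `t ≥ 0`, so `0 < F(t) < t` on `(0, 1)` and `F(1) = 1`.
A decreasing orbit in `(0, 1)` converges to a fixed point of the continuous map `F`, which can
only be `0`. Clearing denominators gives `F(t) = t⁵ Q(1/t) / Q(t)`, hence `F(1/t) = 1/F(t)`,
and the case `t > 1` reduces to the orbit of `1/t`.
-/

open Set Topology

section IterateTendstoZero

variable {f : ℝ → ℝ} {a t : ℝ}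

theorem iterate_mem_Ioo_of_mem_Ioo (hf : ∀ x ∈ Ioo 0 a, f x ∈ Ioo 0 x) (ht : t ∈ Ioo 0 a)
    (n : ℕ) : f^[n] t ∈ Ioo 0 a :=
  have hmaps : MapsTo f (Ioo 0 a) (Ioo 0 a) := fun x hx => ⟨(hf x hx).1, (hf x hx).2.trans hx.2⟩
  hmaps.iterate n ht

theorem antitone_iterate_of_mem_Ioo (hf : ∀ x ∈ Ioo 0 a, f x ∈ Ioo 0 x) (ht : t ∈ Ioo 0 a) :
    Antitone fun n => f^[n] t := by
  refine antitone_nat_of_succ_le fun n => ?_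
  rw [Function.iterate_succ_apply']
  exact (hf _ (iterate_mem_Ioo_of_mem_Ioo hf ht n)).2.le

theorem tendsto_iterate_nhds_zero_of_mem_Ioo (hf : ∀ x ∈ Ioo 0 a, f x ∈ Ioo 0 x)
    (hcont : ∀ x ∈ Ico 0 a, ContinuousAt f x) (ht : t ∈ Ioo 0 a) :
    Tendsto (fun n => f^[n] t) atTop (𝓝 0) := by
  have hnonneg (n : ℕ) : 0 ≤ f^[n] t := (iterate_mem_Ioo_of_mem_Ioo hf ht n).1.le
  have hbdd : BddBelow (range fun n => f^[n] t) := ⟨0, by rintro _ ⟨n, rfl⟩; exact hnonneg n⟩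
  have hlim := tendsto_atTop_ciInf (antitone_iterate_of_mem_Ioo hf ht) hbdd
  set L := ⨅ n, f^[n] t
  have hL0 : 0 ≤ L := le_ciInf hnonneg
  have hLa : L < a := (ciInf_le hbdd 0).trans_lt ht.2
  have hfix : f L = L := isFixedPt_of_tendsto_iterate hlim (hcont L ⟨hL0, hLa⟩)
  obtain hL | hL := hL0.eq_or_lt
  · rwa [← hL] at hlim
  · exact absurd hfix (hf L ⟨hL, hLa⟩).2.ne

end IterateTendstoZero

theorem isingDelta_pos : 0 < isingDelta := Real.sqrt_pos.2 two_pos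

theorem isingDelta_sq : isingDelta ^ 2 = 2 := Real.sq_sqrt zero_le_two

noncomputable def isingBlockDen (t : ℝ) : ℝ :=
  4 + 11 * isingDelta * t + 20 * t ^ 2 + 6 * isingDelta * t ^ 3

theorem isingBlockDen_pos {t : ℝ} (ht : 0 ≤ t) : 0 < isingBlockDen t := by
  have := isingDelta_pos
  unfold isingBlockDen
  positivity

theorem isingBlock_eq (t : ℝ) :
    isingBlock t =
      t + t * (t ^ 2 - 1) * (4 * t ^ 2 + 5 * isingDelta * t + 4) / isingBlockDen t := by
  have hδ3 : isingDelta ^ 3 = 2 * isingDelta := by rw [pow_succ, isingDelta_sq]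
  unfold isingBlock isingBlockDen
  rw [hδ3, isingDelta_sq]
  ring

theorem isingBlock_eq_div {t : ℝ} (ht : 0 < t) :
    isingBlock t = t ^ 5 * isingBlockDen t⁻¹ / isingBlockDen t := by
  have hQ := (isingBlockDen_pos ht.le).ne'
  rw [isingBlock_eq, eq_div_iff hQ, add_mul, div_mul_cancel₀ _ hQ]
  unfold isingBlockDen
  field_simp
  ring

theorem isingBlock_one : isingBlock 1 = 1 := by
  simp [isingBlock_eq]

theorem isingBlock_pos {t : ℝ} (ht : 0 < t) : 0 < isingBlock t := by
  have := isingBlockDen_pos ht.le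
  have := isingBlockDen_pos (inv_pos.2 ht).le
  rw [isingBlock_eq_div ht]
  positivity

theorem isingBlock_lt_self {t : ℝ} (ht : 0 < t) (ht1 : t < 1) : isingBlock t < t := by
  have := isingDelta_pos
  have hneg : t * (t ^ 2 - 1) * (4 * t ^ 2 + 5 * isingDelta * t + 4) < 0 :=
    mul_neg_of_neg_of_pos (mul_neg_of_pos_of_neg ht (by nlinarith)) (by positivity)
  rw [isingBlock_eq]
  linarith [div_neg_of_neg_of_pos hneg (isingBlockDen_pos ht.le)]

theorem isingBlock_mem_Ioo {t : ℝ} (ht : t ∈ Ioo 0 1) : isingBlock t ∈ Ioo 0 t :=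
  ⟨isingBlock_pos ht.1, isingBlock_lt_self ht.1 ht.2⟩

theorem continuousAt_isingBlock {t : ℝ} (ht : 0 ≤ t) : ContinuousAt isingBlock t := by
  rw [show isingBlock = _ from funext isingBlock_eq]
  exact continuousAt_id.add <|
    ContinuousAt.div (by fun_prop) (by unfold isingBlockDen; fun_prop) (isingBlockDen_pos ht).ne'

theorem isingBlock_inv {t : ℝ} (ht : 0 < t) : isingBlock t⁻¹ = (isingBlock t)⁻¹ := by
  rw [isingBlock_eq_div ht, isingBlock_eq_div (inv_pos.2 ht), inv_inv]
  field_simp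

theorem isingBlock_iterate_inv {t : ℝ} (ht : 0 < t) (n : ℕ) :
    isingBlock^[n] t⁻¹ = (isingBlock^[n] t)⁻¹ := by
  induction n generalizing t with
  | zero => rfl
  | succ n ih =>
    rw [Function.iterate_succ_apply, Function.iterate_succ_apply, isingBlock_inv ht,
      ih (isingBlock_pos ht)]

theorem ising_block_map_dynamics :
    isingBlock 1 = 1 ∧
    (∀ t : ℝ, 0 < t → t < 1 →
      (∀ n : ℕ, isingBlock^[n + 1] t ≤ isingBlock^[n] t) ∧
        Tendsto (fun n : ℕ => isingBlock^[n] t) atTop (nhds 0)) ∧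
    (∀ t : ℝ, 1 < t →
      Tendsto (fun n : ℕ => (isingBlock^[n] t)⁻¹) atTop (nhds 0)) := by
  have hF : ∀ x ∈ Ioo (0 : ℝ) 1, isingBlock x ∈ Ioo 0 x := fun x => isingBlock_mem_Ioo
  have hcont : ∀ x ∈ Ico (0 : ℝ) 1, ContinuousAt isingBlock x :=
    fun x hx => continuousAt_isingBlock hx.1
  refine ⟨isingBlock_one, fun t ht ht1 => ⟨fun n => ?_, ?_⟩, fun t ht => ?_⟩
  · exact antitone_iterate_of_mem_Ioo hF ⟨ht, ht1⟩ n.le_succ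
  · exact tendsto_iterate_nhds_zero_of_mem_Ioo hF hcont ⟨ht, ht1⟩
  · have ht0 : 0 < t := one_pos.trans ht
    simp_rw [← isingBlock_iterate_inv ht0]
    exact tendsto_iterate_nhds_zero_of_mem_Ioo hF hcont
      ⟨inv_pos.2 ht0, inv_lt_one_of_one_lt₀ ht⟩
end

section
/- Let G be a finite abelian group and f : G → ℂ nonzero. With the Fourier transform f̂(ξ) = ∑_g f(g)\overline{ξ(g)} and supports S(f) = #{g : f(g) ≠ 0}, S(f̂) = #{ξ : f̂(ξ) ≠ 0}, the Donoho–Stark uncertainty principle S(f)·S(f̂) ≥ |G| holds, and equality S(f)·S(f̂) = |G| holds if and only if f is a modulated and translated multiple of the indicator function of a subgroup, i.e., f(g) = c·χ(g)·1_{g₀+H}(g) for some subgroup H ≤ G, g₀ ∈ G, character χ ∈ Ĝ, and nonzero scalar c. -/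
/-!
Choose `g₀` maximising `‖f‖`. Fourier inversion and the triangle inequality give
`|G| ‖f g₀‖ ≤ ∑_{ξ ∈ supp f̂} ‖f̂ ξ‖ ≤ |supp f̂| ∑_g ‖f g‖ ≤ |supp f̂| |supp f| ‖f g₀‖`.
If equality holds, `‖f‖` is constant on `supp f` and, for each `ξ ∈ supp f̂`, all terms
`f g * conj (ξ g)` of `f̂ ξ` are equal, i.e. `f g = f g₀ * ξ (g - g₀)` on `supp f`. So all
`ξ ∈ supp f̂` agree on `supp f - g₀`, which therefore lies in the subgroup `H` on which they agree;
since `supp f̂` lies in a coset of the annihilator of `H`, of size `|G| / |H|`, equality forces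
`supp f = g₀ + H`. Conversely, if `f = c χ 1_{g₀ + H}` then `f (g + h) = χ h * f g` for `h ∈ H`,
which confines `supp f̂` to the coset of the annihilator of `H` through `χ`.
-/

open Pointwise

open Finset ComplexConjugate
theorem Complex.eq_of_norm_sum_eq_card_mul {ι : Type*} {s : Finset ι} {v : ι → ℂ} {M : ℝ}
    (hv : ∀ i ∈ s, ‖v i‖ = M) (hsum : ‖∑ i ∈ s, v i‖ = #s * M) {i j : ι} (hi : i ∈ s)
    (hj : j ∈ s) : v i = v j := by
  set S := ∑ i ∈ s, v i
  by_cases hS : S = 0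
  · have hM : M = 0 := by
      have : (#s : ℝ) ≠ 0 := by exact_mod_cast (card_pos.2 ⟨i, hi⟩).ne'
      simpa [hS, this] using hsum
    rw [norm_eq_zero.1 ((hv i hi).trans hM), norm_eq_zero.1 ((hv j hj).trans hM)]
  have hle : ∀ k ∈ s, (v k * conj S).re ≤ M * ‖S‖ := fun k hk => by
    simpa [hv k hk] using Complex.re_le_norm (v k * conj S)
  have hsum_re : ∑ k ∈ s, (v k * conj S).re = ∑ k ∈ s, M * ‖S‖ := by
    rw [← Complex.re_sum, ← sum_mul, Complex.mul_conj, Complex.normSq_eq_norm_sq, sum_const,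
      nsmul_eq_mul, ← mul_assoc, ← hsum]
    norm_cast
    ring
  -- equality in `re ≤ ‖·‖` for every term forces `v k * conj S` to be a nonnegative real
  have halign : ∀ k ∈ s, v k * conj S = (M * ‖S‖ : ℝ) := fun k hk => by
    have hre := (sum_eq_sum_iff_of_le hle).1 hsum_re k hk
    have hnorm : (v k * conj S).re = ‖v k * conj S‖ := by simp [hre, hv k hk]
    rw [Complex.eq_re_of_ofReal_le (z := v k * conj S) (r := 0)
      (by simpa using Complex.re_eq_norm.1 hnorm), hre]
  exact mul_right_cancel₀ ((map_ne_zero _).2 hS) ((halign i hi).trans (halign j hj).symm)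

def AddChar.eqLocus {A M : Type*} [AddGroup A] [DivisionCommMonoid M] (ψ₀ : AddChar A M)
    (Ψ : Set (AddChar A M)) : AddSubgroup A where
  carrier := {a | ∀ ψ ∈ Ψ, ψ a = ψ₀ a}
  add_mem' ha hb ψ hψ := by simp [AddChar.map_add_eq_mul, ha ψ hψ, hb ψ hψ]
  zero_mem' := by simp
  neg_mem' ha ψ hψ := by simp [AddChar.map_neg_eq_inv, ha ψ hψ]

section

variable {G : Type*} [AddCommGroup G] [Fintype G]

theorem AddChar.apply_ne_zero (ψ : AddChar G ℂ) (g : G) : ψ g ≠ 0 :=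
  norm_ne_zero_iff.1 (by simp)

theorem AddChar.card_trivialOn_mul_card (H : AddSubgroup G) :
    Nat.card {ξ : AddChar G ℂ // ∀ h ∈ H, ξ h = 1} * Nat.card H = Fintype.card G := by
  classical
  let e : AddChar (G ⧸ H) ℂ ≃ {ξ : AddChar G ℂ // ∀ h ∈ H, ξ h = 1} :=
    { toFun κ := ⟨κ.compAddMonoidHom (QuotientAddGroup.mk' H), fun h hh => by
        simp [(QuotientAddGroup.eq_zero_iff h).2 hh]⟩
      invFun ξ := AddChar.toAddMonoidHomEquiv.symm
        (QuotientAddGroup.lift H ξ.1.toAddMonoidHom fun h hh => by simp [ξ.2 h hh])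
      left_inv κ := by
        ext x
        induction x using QuotientAddGroup.induction_on
        rfl
      right_inv ξ := rfl }
  have : Fintype (G ⧸ H) := Fintype.ofFinite _
  rw [← Nat.card_congr e, Nat.card_eq_fintype_card, AddChar.card_eq, ← Nat.card_eq_fintype_card,
    ← AddSubgroup.card_eq_card_quotient_mul_card_addSubgroup, Nat.card_eq_fintype_card]

theorem AddChar.card_mul_card_le_of_forall_apply_eq (H : AddSubgroup G)
    {Ψ : Finset (AddChar G ℂ)} {ψ₀ : AddChar G ℂ} (hΨ : ∀ ψ ∈ Ψ, ∀ h ∈ H, ψ h = ψ₀ h) :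
    #Ψ * Nat.card H ≤ Fintype.card G := by
  rw [← AddChar.card_trivialOn_mul_card H]
  gcongr
  let toTrivialOn (ψ : Ψ) : {ξ : AddChar G ℂ // ∀ h ∈ H, ξ h = 1} :=
    ⟨ψ * ψ₀⁻¹, fun h hh => by simp [hΨ ψ ψ.2 h hh, ← AddChar.map_add_eq_mul]⟩
  have : Function.Injective toTrivialOn := fun ψ ψ' hψ =>
    Subtype.ext (mul_right_cancel (congrArg Subtype.val hψ))
  simpa using Nat.card_le_card_of_injective toTrivialOn this

theorem exists_addSubgroup_coe_eq_vadd_of_card_le {A : Finset G} {Ψ : Finset (AddChar G ℂ)} {a₀ : G}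
    {ψ₀ : AddChar G ℂ} (hψ₀ : ψ₀ ∈ Ψ) (hAΨ : ∀ a ∈ A, ∀ ψ ∈ Ψ, ψ (a - a₀) = ψ₀ (a - a₀))
    (hcard : Fintype.card G ≤ #A * #Ψ) :
    ∃ H : AddSubgroup G, (A : Set G) = a₀ +ᵥ (H : Set G) := by
  set H := ψ₀.eqLocus Ψ
  have hAH : ∀ a ∈ A, a - a₀ ∈ H := fun a ha ψ hψ => hAΨ a ha ψ hψ
  have hcardH : Nat.card H ≤ #A := by
    have := AddChar.card_mul_card_le_of_forall_apply_eq H fun ψ hψ h hh => hh ψ hψ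
    exact le_of_mul_le_mul_left (by linarith) (card_pos.2 ⟨ψ₀, hψ₀⟩)
  refine ⟨H, Set.eq_of_subset_of_ncard_le (fun a ha => ⟨a - a₀, hAH a ha, by simp⟩) ?_⟩
  rwa [Set.ncard_vadd_set, Set.ncard_coe_finset, ← Nat.card_coe_set_eq]

noncomputable def dft (f : G → ℂ) (ξ : AddChar G ℂ) : ℂ := ∑ g, f g * conj (ξ g)

variable (f : G → ℂ)

theorem sum_dft_mul_apply (g : G) : ∑ ξ, dft f ξ * ξ g = Fintype.card G * f g := by
  classical
  calc ∑ ξ, dft f ξ * ξ g = ∑ h, f h * ∑ ξ : AddChar G ℂ, ξ (g - h) := by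
        simp_rw [dft, sum_mul, mul_sum]
        rw [sum_comm]
        refine sum_congr rfl fun h _ => sum_congr rfl fun ξ _ => ?_
        rw [mul_assoc, ← AddChar.map_neg_eq_conj, ← AddChar.map_add_eq_mul, neg_add_eq_sub]
    _ = Fintype.card G * f g := by simp [AddChar.sum_apply_eq_ite, sub_eq_zero, mul_comm]

theorem dft_eq_sum_support (ξ : AddChar G ℂ) :
    dft f ξ = ∑ g ∈ {g | f g ≠ 0}, f g * conj (ξ g) :=
  (sum_filter_of_ne fun _ _ h => left_ne_zero_of_mul h).symm

theorem norm_dft_le (ξ : AddChar G ℂ) : ‖dft f ξ‖ ≤ ∑ g ∈ {g | f g ≠ 0}, ‖f g‖ := by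
  rw [dft_eq_sum_support]
  exact (norm_sum_le _ _).trans_eq (by simp)

theorem card_mul_norm_le_sum_norm_dft (g : G) :
    Fintype.card G * ‖f g‖ ≤ ∑ ξ ∈ {ξ | dft f ξ ≠ 0}, ‖dft f ξ‖ := by
  rw [sum_filter_of_ne fun _ _ h => norm_ne_zero_iff.1 h]
  calc Fintype.card G * ‖f g‖ = ‖∑ ξ, dft f ξ * ξ g‖ := by simp [sum_dft_mul_apply]
    _ ≤ ∑ ξ, ‖dft f ξ‖ := (norm_sum_le _ _).trans_eq (by simp)

theorem card_le_card_support_mul_card_support_dft (hf : f ≠ 0) :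
    Fintype.card G ≤ #{g | f g ≠ 0} * #{ξ | dft f ξ ≠ 0} := by
  have : Nonempty G := ⟨0⟩
  obtain ⟨g₀, hmax⟩ := Finite.exists_max (‖f ·‖)
  have hM : 0 < ‖f g₀‖ := by
    obtain ⟨g, hg⟩ := Function.ne_iff.1 hf
    exact (norm_pos_iff.2 hg).trans_le (hmax g)
  have := calc (Fintype.card G : ℝ) * ‖f g₀‖ ≤ ∑ ξ ∈ {ξ | dft f ξ ≠ 0}, ‖dft f ξ‖ :=
        card_mul_norm_le_sum_norm_dft f g₀
    _ ≤ #{ξ | dft f ξ ≠ 0} * ∑ g ∈ {g | f g ≠ 0}, ‖f g‖ := by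
        simpa using sum_le_card_nsmul _ _ _ fun ξ _ => norm_dft_le f ξ
    _ ≤ #{ξ | dft f ξ ≠ 0} * (#{g | f g ≠ 0} * ‖f g₀‖) := by
        gcongr
        simpa using sum_le_card_nsmul _ _ _ fun g _ => hmax g
  rw [mul_left_comm, ← mul_assoc] at this
  exact_mod_cast le_of_mul_le_mul_right this hM

theorem norm_eq_of_card_support_mul_card_support_dft_eq {g₀ : G} (hmax : ∀ g, ‖f g‖ ≤ ‖f g₀‖)
    (h : #{g | f g ≠ 0} * #{ξ | dft f ξ ≠ 0} = Fintype.card G) :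
    (∀ g, f g ≠ 0 → ‖f g‖ = ‖f g₀‖) ∧
      ∀ ξ, dft f ξ ≠ 0 → ‖dft f ξ‖ = ∑ g ∈ {g | f g ≠ 0}, ‖f g‖ := by
  set T : Finset G := {g | f g ≠ 0}
  set S : Finset (AddChar G ℂ) := {ξ | dft f ξ ≠ 0}
  set M := ‖f g₀‖
  set B := ∑ g ∈ T, ‖f g‖
  have hT : ∀ g ∈ T, ‖f g‖ ≤ M := fun g _ => hmax g
  have hS : ∀ ξ ∈ S, ‖dft f ξ‖ ≤ B := fun ξ _ => norm_dft_le f ξ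
  have hsumT : B ≤ #T * M := by simpa using sum_le_card_nsmul _ _ _ hT
  have hsumS : ∑ ξ ∈ S, ‖dft f ξ‖ ≤ #S * B := by simpa using sum_le_card_nsmul _ _ _ hS
  have hlow : (Fintype.card G : ℝ) * M ≤ ∑ ξ ∈ S, ‖dft f ξ‖ := card_mul_norm_le_sum_norm_dft f g₀
  have hcard : (#S : ℝ) * (#T * M) = Fintype.card G * M := by
    rw [← h]
    push_cast
    ring
  have hSpos : (0 : ℝ) < #S := by
    exact_mod_cast pos_of_mul_pos_right (h ▸ Fintype.card_pos) (Nat.zero_le _)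
  -- the chain `|G| M ≤ ∑ ‖f̂ ξ‖ ≤ #S B ≤ #S #T M = |G| M` collapses
  have hB : B = #T * M := le_antisymm hsumT (le_of_mul_le_mul_left (by linarith) hSpos)
  have hF : ∑ ξ ∈ S, ‖dft f ξ‖ = #S * B := le_antisymm hsumS (by rw [hB]; linarith)
  constructor
  · intro g hg
    exact (sum_eq_sum_iff_of_le hT).1 (by simpa using hB) g (by simpa [T])
  · intro ξ hξ
    exact (sum_eq_sum_iff_of_le hS).1 (by simpa using hF) ξ (by simpa [S])

theorem eq_mul_apply_sub_of_norm_dft_eq {g₀ : G} {ξ : AddChar G ℂ} (hg₀ : f g₀ ≠ 0)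
    (hnorm : ∀ g, f g ≠ 0 → ‖f g‖ = ‖f g₀‖)
    (hξ : ‖dft f ξ‖ = ∑ g ∈ {g | f g ≠ 0}, ‖f g‖) {g : G} (hg : f g ≠ 0) :
    f g = f g₀ * ξ (g - g₀) := by
  have hterm : f g * conj (ξ g) = f g₀ * conj (ξ g₀) := by
    refine Complex.eq_of_norm_sum_eq_card_mul (s := {g | f g ≠ 0})
      (v := fun g => f g * conj (ξ g)) (M := ‖f g₀‖) (fun g hg => ?_) ?_
      (by simpa using hg) (by simpa using hg₀)
    · simpa using hnorm g (by simpa using hg)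
    · rw [← dft_eq_sum_support, hξ, ← nsmul_eq_mul, ← sum_const]
      exact sum_congr rfl fun g hg => hnorm g (by simpa using hg)
  calc f g = f g * conj (ξ g) * ξ g := by
        rw [mul_assoc, ← AddChar.map_neg_eq_conj, ← AddChar.map_add_eq_mul, neg_add_cancel,
          AddChar.map_zero_eq_one, mul_one]
    _ = f g₀ * ξ (g - g₀) := by
        rw [hterm, mul_assoc, ← AddChar.map_neg_eq_conj, ← AddChar.map_add_eq_mul, neg_add_eq_sub]

theorem exists_eq_indicator_of_card_support_mul_card_support_dft_eq (hf : f ≠ 0)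
    (h : #{g | f g ≠ 0} * #{ξ | dft f ξ ≠ 0} = Fintype.card G) :
    ∃ (H : AddSubgroup G) (g₀ : G) (χ : AddChar G ℂ) (c : ℂ), c ≠ 0 ∧
      ∀ g, f g = c * χ g * Set.indicator (g₀ +ᵥ (H : Set G)) (fun _ => (1 : ℂ)) g := by
  have : Nonempty G := ⟨0⟩
  obtain ⟨g₀, hmax⟩ := Finite.exists_max (‖f ·‖)
  have hg₀ : f g₀ ≠ 0 := by
    obtain ⟨g, hg⟩ := Function.ne_iff.1 hf
    exact norm_pos_iff.1 ((norm_pos_iff.2 hg).trans_le (hmax g))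
  obtain ⟨hnorm, hdft⟩ := norm_eq_of_card_support_mul_card_support_dft_eq f hmax h
  have hphase : ∀ ξ, dft f ξ ≠ 0 → ∀ g, f g ≠ 0 → f g = f g₀ * ξ (g - g₀) :=
    fun ξ hξ g hg => eq_mul_apply_sub_of_norm_dft_eq f hg₀ hnorm (hdft ξ hξ) hg
  obtain ⟨ξ₀, hξ₀⟩ : ∃ ξ₀, dft f ξ₀ ≠ 0 := by
    obtain ⟨ξ₀, hξ₀⟩ := card_pos.1 (pos_of_mul_pos_right (h ▸ Fintype.card_pos) (Nat.zero_le _))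
    exact ⟨ξ₀, by simpa using hξ₀⟩
  obtain ⟨H, hH⟩ := exists_addSubgroup_coe_eq_vadd_of_card_le (a₀ := g₀) (ψ₀ := ξ₀)
    (by simpa using hξ₀)
    (fun g hg ξ hξ => mul_left_cancel₀ hg₀ <| by
      rw [← hphase ξ (by simpa using hξ) g (by simpa using hg),
        ← hphase ξ₀ hξ₀ g (by simpa using hg)])
    h.ge
  refine ⟨H, g₀, ξ₀, f g₀ * ξ₀ (-g₀), mul_ne_zero hg₀ (ξ₀.apply_ne_zero _), fun g => ?_⟩
  have hmem : g ∈ g₀ +ᵥ (H : Set G) ↔ f g ≠ 0 := by simp [← hH]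
  by_cases hg : f g = 0
  · simp [hg, hmem]
  · rw [Set.indicator_of_mem (hmem.2 hg), hphase ξ₀ hξ₀ g hg, sub_eq_neg_add,
      AddChar.map_add_eq_mul]
    ring

theorem apply_eq_of_dft_ne_zero {χ ξ : AddChar G ℂ} {h : G} (hf : ∀ g, f (g + h) = χ h * f g)
    (hξ : dft f ξ ≠ 0) : ξ h = χ h := by
  have hshift : dft f ξ = χ h * conj (ξ h) * dft f ξ := by
    rw [dft, mul_sum]
    refine (Fintype.sum_equiv (Equiv.addRight h) _ _ fun g => ?_).symm
    simp [hf, AddChar.map_add_eq_mul]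
    ring
  have hunit : χ h * conj (ξ h) = 1 := by
    simpa using (mul_eq_right₀ hξ).1 hshift.symm
  calc ξ h = χ h * conj (ξ h) * ξ h := by rw [hunit, one_mul]
    _ = χ h := by rw [mul_assoc, ← AddChar.map_neg_eq_conj, ← AddChar.map_add_eq_mul,
          neg_add_cancel, AddChar.map_zero_eq_one, mul_one]

theorem card_support_mul_card_support_dft_le_of_eq_indicator {H : AddSubgroup G} {g₀ : G}
    {χ : AddChar G ℂ} {c : ℂ} (hc : c ≠ 0)
    (hf : ∀ g, f g = c * χ g * Set.indicator (g₀ +ᵥ (H : Set G)) (fun _ => (1 : ℂ)) g) :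
    #{g | f g ≠ 0} * #{ξ | dft f ξ ≠ 0} ≤ Fintype.card G := by
  have hsupp : (({g | f g ≠ 0} : Finset G) : Set G) = g₀ +ᵥ (H : Set G) := by
    ext g
    by_cases hg : g ∈ g₀ +ᵥ (H : Set G) <;> simp [hf, hg, hc, χ.apply_ne_zero]
  have hshift : ∀ h ∈ H, ∀ g, f (g + h) = χ h * f g := fun h hh g => by
    have hmem : g + h ∈ g₀ +ᵥ (H : Set G) ↔ g ∈ g₀ +ᵥ (H : Set G) := by
      simp only [Set.mem_vadd_set_iff_neg_vadd_mem, vadd_eq_add, ← add_assoc, SetLike.mem_coe,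
        H.add_mem_cancel_right hh]
    classical
    simp only [hf, Set.indicator_apply, hmem, AddChar.map_add_eq_mul]
    ring
  rw [← Set.ncard_coe_finset, hsupp, Set.ncard_vadd_set, ← Nat.card_coe_set_eq, mul_comm]
  exact AddChar.card_mul_card_le_of_forall_apply_eq H fun ξ hξ h hh =>
    apply_eq_of_dft_ne_zero f (hshift h hh) (by simpa using hξ)

end

theorem donoho_stark_and_equality_case {G : Type*} [AddCommGroup G] [Fintype G]
    (f : G → ℂ) (hf : f ≠ 0) :
    Fintype.card G ≤
        Nat.card {g : G // f g ≠ 0} *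
          Nat.card {ξ : AddChar G ℂ // (∑ g : G, f g * (starRingEnd ℂ) (ξ g)) ≠ 0} ∧
    (Nat.card {g : G // f g ≠ 0} *
          Nat.card {ξ : AddChar G ℂ // (∑ g : G, f g * (starRingEnd ℂ) (ξ g)) ≠ 0} =
        Fintype.card G ↔
      ∃ (H : AddSubgroup G) (g₀ : G) (χ : AddChar G ℂ) (c : ℂ), c ≠ 0 ∧
        ∀ g : G, f g = c * χ g * Set.indicator (g₀ +ᵥ (H : Set G)) (fun _ => (1 : ℂ)) g) := by
  classical
  change Fintype.card G ≤ Nat.card {g // f g ≠ 0} * Nat.card {ξ // dft f ξ ≠ 0} ∧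
    (Nat.card {g // f g ≠ 0} * Nat.card {ξ // dft f ξ ≠ 0} = Fintype.card G ↔ _)
  simp only [Nat.card_eq_fintype_card, Fintype.card_subtype]
  refine ⟨card_le_card_support_mul_card_support_dft f hf,
    exists_eq_indicator_of_card_support_mul_card_support_dft_eq f hf, ?_⟩
  rintro ⟨H, g₀, χ, c, hc, hfc⟩
  exact (card_support_mul_card_support_dft_le_of_eq_indicator f hc hfc).antisymm
    (card_le_card_support_mul_card_support_dft f hf)
end
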